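/- For any stationary finite Markov chains 𝒳 and 𝒴 and any cost matrix C: X×Y → ℝ₊, one has d_OTC(𝒳,𝒴;C) = lim_{δ→0⁺} d_WL^{δ,(∞)}(𝒳,𝒴;C). -/

import Mathlib

/-!
For a time-homogeneous coupling started from a stationary law, the law never moves, so its
discounted cost is its OTC cost: `d_WL^δ ≤ d_OTC`.

Conversely, any Markovian coupling `π` yields the `δ`-discounted occupation measure
`κ = ∑ₜ δ(1-δ)ᵗ μₜ` and the discounted law `ρ` of consecutive pairs of states. Stationarity of the
two chains makes `κ` a coupling of the initial laws, `ρ(z, ·)` couples the rescaled kernels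
`κ z • m^X`, `κ z • m^Y`, and the geometric weights make `κ` stationary up to an error `δ`.
These constraints cut out a compact set, so as `δ → 0` the pairs `(κ, ρ)` accumulate at an
exactly stationary pair, and the kernel `ρ(z, ·) / κ z` is then a time-homogeneous coupling with
stationary initial law `κ`.
-/

open scoped BigOperators
open Filter Topology

/-- A probability vector on a finite type. -/
def IsProb {X : Type*} [Fintype X] (ν : X → ℝ) : Prop :=
  (∀ x, 0 ≤ ν x) ∧ ∑ x, ν x = 1

/-- `μ` is a coupling of `α` and `β`. -/
def IsCoupling {X Y : Type*} [Fintype X] [Fintype Y]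
    (μ : X × Y → ℝ) (α : X → ℝ) (β : Y → ℝ) : Prop :=
  (∀ z, 0 ≤ μ z) ∧ (∀ x, ∑ y, μ (x, y) = α x) ∧ (∀ y, ∑ x, μ (x, y) = β y)

/-- A finite Markov chain: a transition kernel together with an initial distribution. -/
structure MarkovChain (X : Type*) [Fintype X] where
  kernel : X → X → ℝ
  init : X → ℝ
  kernel_prob : ∀ x, IsProb (kernel x)
  init_prob : IsProb init

/-- A Markovian coupling between two finite Markov chains.  `trans t` is the
transition coupling used from time `t` to time `t+1` (i.e. `m^{(t+1)}`). -/
structure MarkovCoupling {X Y : Type*} [Fintype X] [Fintype Y]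
    (MX : MarkovChain X) (MY : MarkovChain Y) where
  init : X × Y → ℝ
  trans : ℕ → X × Y → X × Y → ℝ
  init_coupling : IsCoupling init MX.init MY.init
  trans_coupling : ∀ t xy, IsCoupling (trans t xy) (MX.kernel xy.1) (MY.kernel xy.2)

/-- Time-`t` law determined by an initial distribution and step kernels. -/
noncomputable def lawAux {X Y : Type*} [Fintype X] [Fintype Y]
    (ν : X × Y → ℝ) (m : ℕ → X × Y → X × Y → ℝ) : ℕ → X × Y → ℝ
  | 0 => ν
  | t + 1 => fun z => ∑ w : X × Y, m t w z * lawAux ν m t w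

/-- The time-`t` law of a Markovian coupling. -/
noncomputable def MarkovCoupling.law {X Y : Type*} [Fintype X] [Fintype Y]
    {MX : MarkovChain X} {MY : MarkovChain Y} (π : MarkovCoupling MX MY) :
    ℕ → X × Y → ℝ :=
  lawAux π.init π.trans

/-- `p` is a probability distribution on `ℕ`. -/
def IsProbNat (p : ℕ → ℝ) : Prop := (∀ t, 0 ≤ p t) ∧ HasSum p 1

/-- The Optimal Transport Markov (OTM) distance associated to `p`. -/
noncomputable def dOTM {X Y : Type*} [Fintype X] [Fintype Y] (p : ℕ → ℝ)
    (MX : MarkovChain X) (MY : MarkovChain Y) (C : X × Y → ℝ) : ℝ :=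
  ⨅ π : MarkovCoupling MX MY, ∑' t, p t * ∑ z : X × Y, C z * π.law t z

/-- A Markovian coupling is time homogeneous if its transition couplings do not
depend on the time index. -/
def IsTimeHomogeneous {X Y : Type*} [Fintype X] [Fintype Y]
    {MX : MarkovChain X} {MY : MarkovChain Y} (π : MarkovCoupling MX MY) : Prop :=
  ∀ t, π.trans t = π.trans 0

/-- The initial coupling is stationary for the coupled transition kernel. -/
def HasStationaryInit {X Y : Type*} [Fintype X] [Fintype Y]
    {MX : MarkovChain X} {MY : MarkovChain Y} (π : MarkovCoupling MX MY) : Prop :=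
  ∀ z' : X × Y, ∑ z : X × Y, π.trans 0 z z' * π.init z = π.init z'

/-- A Markov chain is stationary if its initial distribution is stationary for its kernel. -/
def IsStationaryMC {X : Type*} [Fintype X] (M : MarkovChain X) : Prop :=
  ∀ x', ∑ x, M.kernel x x' * M.init x = M.init x'

/-- The optimal transition coupling (OTC) distance. -/
noncomputable def dOTC {X Y : Type*} [Fintype X] [Fintype Y]
    (MX : MarkovChain X) (MY : MarkovChain Y) (C : X × Y → ℝ) : ℝ :=
  ⨅ π : {π : MarkovCoupling MX MY // IsTimeHomogeneous π ∧ HasStationaryInit π},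
    ∑ z : X × Y, C z * π.1.init z

/-- The geometric distribution `p_δ^∞` on `ℕ`. -/
noncomputable def pGeom (δ : ℝ) : ℕ → ℝ := fun t => δ * (1 - δ) ^ t

/-- The truncation `p_δ^k` of the geometric distribution at `k`. -/
noncomputable def pTrunc (δ : ℝ) (k : ℕ) : ℕ → ℝ := fun t =>
  if t < k then δ * (1 - δ) ^ t else if t = k then (1 - δ) ^ k else 0

open Set

section Coupling

variable {X Y : Type*} [Fintype X] [Fintype Y]

lemma IsProb.le_one {ν : X → ℝ} (h : IsProb ν) (x : X) : ν x ≤ 1 := by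
  rw [← h.2]
  exact Finset.single_le_sum (fun y _ => h.1 y) (Finset.mem_univ x)

lemma IsCoupling.le_left {μ : X × Y → ℝ} {α : X → ℝ} {β : Y → ℝ} (h : IsCoupling μ α β)
    (z : X × Y) : μ z ≤ α z.1 := by
  rw [← h.2.1 z.1]
  exact Finset.single_le_sum (fun y _ => h.1 (z.1, y)) (Finset.mem_univ z.2)

lemma IsCoupling.isProb {μ : X × Y → ℝ} {α : X → ℝ} {β : Y → ℝ} (h : IsCoupling μ α β)
    (hα : IsProb α) : IsProb μ := by
  refine ⟨h.1, ?_⟩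
  rw [Fintype.sum_prod_type]
  simp only [h.2.1]
  exact hα.2

lemma isCoupling_mul {α : X → ℝ} {β : Y → ℝ} (hα : IsProb α) (hβ : IsProb β) :
    IsCoupling (fun z => α z.1 * β z.2) α β :=
  ⟨fun z => mul_nonneg (hα.1 z.1) (hβ.1 z.2),
   fun x => by simp only [← Finset.mul_sum, hβ.2, mul_one],
   fun y => by simp only [← Finset.sum_mul, hα.2, one_mul]⟩

lemma IsCoupling.div_const {μ : X × Y → ℝ} {α : X → ℝ} {β : Y → ℝ} {c : ℝ}
    (h : IsCoupling μ (fun x => c * α x) (fun y => c * β y)) (hc : 0 < c) :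
    IsCoupling (fun z => μ z / c) α β :=
  ⟨fun z => div_nonneg (h.1 z) hc.le,
   fun x => by rw [← Finset.sum_div, h.2.1 x, mul_div_cancel_left₀ _ hc.ne'],
   fun y => by rw [← Finset.sum_div, h.2.2 y, mul_div_cancel_left₀ _ hc.ne']⟩

lemma isClosed_setOf_isCoupling :
    IsClosed {q : (X × Y → ℝ) × (X → ℝ) × (Y → ℝ) | IsCoupling q.1 q.2.1 q.2.2} := by
  simp only [IsCoupling, ofPred_and, ofPred_forall]
  exact (isClosed_iInter fun z => isClosed_le continuous_const (by fun_prop)).inter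
    ((isClosed_iInter fun x => isClosed_eq (by fun_prop) (by fun_prop)).inter
      (isClosed_iInter fun y => isClosed_eq (by fun_prop) (by fun_prop)))

end Coupling

section ProbNat

variable {p : ℕ → ℝ}

lemma isProbNat_pGeom {δ : ℝ} (h0 : 0 < δ) (h1 : δ ≤ 1) : IsProbNat (pGeom δ) := by
  refine ⟨fun t => mul_nonneg h0.le (pow_nonneg (by linarith) t), ?_⟩
  have h := (hasSum_geometric_of_lt_one (r := 1 - δ) (by linarith) (by linarith)).mul_left δ
  rwa [sub_sub_cancel, mul_inv_cancel₀ h0.ne'] at h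

lemma IsProbNat.summable_mul (hp : IsProbNat p) {f : ℕ → ℝ} (hf : ∀ t, f t ∈ Icc 0 1) :
    Summable fun t => p t * f t :=
  hp.2.summable.of_nonneg_of_le (fun t => mul_nonneg (hp.1 t) (hf t).1)
    (fun t => mul_le_of_le_one_right (hp.1 t) (hf t).2)

lemma IsProbNat.tsum_mul_const (hp : IsProbNat p) (c : ℝ) : ∑' t, p t * c = c := by
  rw [tsum_mul_right, hp.2.tsum_eq, one_mul]

lemma IsProbNat.tsum_mul_mem_Icc (hp : IsProbNat p) {f : ℕ → ℝ} (hf : ∀ t, f t ∈ Icc 0 1) :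
    ∑' t, p t * f t ∈ Icc 0 1 := by
  refine ⟨tsum_nonneg fun t => mul_nonneg (hp.1 t) (hf t).1, ?_⟩
  rw [← hp.2.tsum_eq]
  exact (hp.summable_mul hf).tsum_le_tsum (fun t => mul_le_of_le_one_right (hp.1 t) (hf t).2)
    hp.2.summable

lemma IsProbNat.sum_tsum_mul (hp : IsProbNat p) {ι : Type*} [Fintype ι] {f : ℕ → ι → ℝ}
    (hf : ∀ t i, f t i ∈ Icc 0 1) : ∑ i, ∑' t, p t * f t i = ∑' t, p t * ∑ i, f t i := by
  rw [← Summable.tsum_finsetSum fun i _ => hp.summable_mul (hf · i)]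
  simp only [Finset.mul_sum]

end ProbNat

namespace MarkovCoupling

variable {X Y : Type*} [Fintype X] [Fintype Y] {MX : MarkovChain X} {MY : MarkovChain Y}
  (π : MarkovCoupling MX MY)

lemma law_succ (t : ℕ) (z : X × Y) :
    π.law (t + 1) z = ∑ w : X × Y, π.trans t w z * π.law t w := rfl

lemma sum_trans_fst (t : ℕ) (z : X × Y) (x' : X) :
    ∑ y', π.trans t z (x', y') = MX.kernel z.1 x' :=
  (π.trans_coupling t z).2.1 x'

lemma sum_trans_snd (t : ℕ) (z : X × Y) (y' : Y) :
    ∑ x', π.trans t z (x', y') = MY.kernel z.2 y' :=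
  (π.trans_coupling t z).2.2 y'

lemma trans_mem_Icc (t : ℕ) (z z' : X × Y) : π.trans t z z' ∈ Icc 0 1 :=
  ⟨(π.trans_coupling t z).1 z', ((π.trans_coupling t z).isProb (MX.kernel_prob z.1)).le_one z'⟩

lemma law_nonneg : ∀ t z, 0 ≤ π.law t z
  | 0, z => π.init_coupling.1 z
  | t + 1, _ => Finset.sum_nonneg fun w _ =>
      mul_nonneg ((π.trans_coupling t w).1 _) (law_nonneg t w)

lemma sum_law_fst (hMX : IsStationaryMC MX) (t : ℕ) (x : X) :
    ∑ y, π.law t (x, y) = MX.init x := by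
  induction t generalizing x with
  | zero => exact π.init_coupling.2.1 x
  | succ t ih =>
    calc ∑ y, π.law (t + 1) (x, y)
        = ∑ w : X × Y, (∑ y, π.trans t w (x, y)) * π.law t w := by
          simp only [law_succ, Finset.sum_mul]
          exact Finset.sum_comm
      _ = ∑ x₀, MX.kernel x₀ x * ∑ y₀, π.law t (x₀, y₀) := by
          simp only [sum_trans_fst, Fintype.sum_prod_type, Finset.mul_sum]
      _ = MX.init x := by simp only [ih, hMX x]

lemma sum_law_snd (hMY : IsStationaryMC MY) (t : ℕ) (y : Y) :
    ∑ x, π.law t (x, y) = MY.init y := by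
  induction t generalizing y with
  | zero => exact π.init_coupling.2.2 y
  | succ t ih =>
    calc ∑ x, π.law (t + 1) (x, y)
        = ∑ w : X × Y, (∑ x, π.trans t w (x, y)) * π.law t w := by
          simp only [law_succ, Finset.sum_mul]
          exact Finset.sum_comm
      _ = ∑ y₀, MY.kernel y₀ y * ∑ x₀, π.law t (x₀, y₀) := by
          simp only [sum_trans_snd, Fintype.sum_prod_type_right, Finset.mul_sum]
      _ = MY.init y := by simp only [ih, hMY y]

lemma law_mem_Icc (hMX : IsStationaryMC MX) (t : ℕ) (z : X × Y) : π.law t z ∈ Icc 0 1 := by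
  refine ⟨π.law_nonneg t z, IsProb.le_one ⟨π.law_nonneg t, ?_⟩ z⟩
  rw [Fintype.sum_prod_type]
  simp only [π.sum_law_fst hMX]
  exact MX.init_prob.2

lemma law_eq_init (hhom : IsTimeHomogeneous π) (hstat : HasStationaryInit π) (t : ℕ) :
    π.law t = π.init := by
  induction t with
  | zero => rfl
  | succ t ih =>
    funext z
    rw [law_succ, ih, hhom t]
    exact hstat z

end MarkovCoupling

section ProductCoupling

variable {X Y : Type*} [Fintype X] [Fintype Y]

noncomputable def prodCoupling (MX : MarkovChain X) (MY : MarkovChain Y) :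
    MarkovCoupling MX MY where
  init z := MX.init z.1 * MY.init z.2
  trans _ z z' := MX.kernel z.1 z'.1 * MY.kernel z.2 z'.2
  init_coupling := isCoupling_mul MX.init_prob MY.init_prob
  trans_coupling _ z := isCoupling_mul (MX.kernel_prob z.1) (MY.kernel_prob z.2)

instance (MX : MarkovChain X) (MY : MarkovChain Y) : Nonempty (MarkovCoupling MX MY) :=
  ⟨prodCoupling MX MY⟩

lemma hasStationaryInit_prodCoupling {MX : MarkovChain X} {MY : MarkovChain Y}
    (hMX : IsStationaryMC MX) (hMY : IsStationaryMC MY) :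
    HasStationaryInit (prodCoupling MX MY) := by
  intro z'
  calc ∑ z : X × Y, MX.kernel z.1 z'.1 * MY.kernel z.2 z'.2 * (MX.init z.1 * MY.init z.2)
      = (∑ x, MX.kernel x z'.1 * MX.init x) * ∑ y, MY.kernel y z'.2 * MY.init y := by
        rw [Fintype.sum_prod_type, Finset.sum_mul_sum]
        exact Finset.sum_congr rfl fun x _ => Finset.sum_congr rfl fun y _ => by ring
    _ = MX.init z'.1 * MY.init z'.2 := by rw [hMX, hMY]

end ProductCoupling

namespace MarkovCoupling

variable {X Y : Type*} [Fintype X] [Fintype Y] {MX : MarkovChain X} {MY : MarkovChain Y}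
  (π : MarkovCoupling MX MY) {p : ℕ → ℝ}

noncomputable def occupation (p : ℕ → ℝ) (z : X × Y) : ℝ :=
  ∑' t, p t * π.law t z

noncomputable def stepOccupation (p : ℕ → ℝ) (z z' : X × Y) : ℝ :=
  ∑' t, p t * (π.law t z * π.trans t z z')

lemma isCoupling_occupation (hMX : IsStationaryMC MX) (hMY : IsStationaryMC MY)
    (hp : IsProbNat p) : IsCoupling (π.occupation p) MX.init MY.init := by
  have hlaw := π.law_mem_Icc hMX
  refine ⟨fun z => (hp.tsum_mul_mem_Icc (hlaw · z)).1, fun x => ?_, fun y => ?_⟩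
  · simp only [occupation]
    rw [hp.sum_tsum_mul fun t y => hlaw t (x, y)]
    simp only [π.sum_law_fst hMX, hp.tsum_mul_const]
  · simp only [occupation]
    rw [hp.sum_tsum_mul fun t x => hlaw t (x, y)]
    simp only [π.sum_law_snd hMY, hp.tsum_mul_const]

lemma isCoupling_stepOccupation (hMX : IsStationaryMC MX) (hp : IsProbNat p) (z : X × Y) :
    IsCoupling (π.stepOccupation p z) (fun x' => π.occupation p z * MX.kernel z.1 x')
      (fun y' => π.occupation p z * MY.kernel z.2 y') := by
  have hpair : ∀ t z', π.law t z * π.trans t z z' ∈ Icc 0 1 := fun t z' =>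
    unitInterval.mul_mem (π.law_mem_Icc hMX t z) (π.trans_mem_Icc t z z')
  refine ⟨fun z' => (hp.tsum_mul_mem_Icc (hpair · z')).1, fun x' => ?_, fun y' => ?_⟩
  · simp only [stepOccupation]
    rw [hp.sum_tsum_mul fun t y' => hpair t (x', y'), occupation, ← tsum_mul_right]
    simp only [← Finset.mul_sum, sum_trans_fst, mul_assoc]
  · simp only [stepOccupation]
    rw [hp.sum_tsum_mul fun t x' => hpair t (x', y'), occupation, ← tsum_mul_right]
    simp only [← Finset.mul_sum, sum_trans_snd, mul_assoc]

lemma sum_mul_occupation (hMX : IsStationaryMC MX) (hp : IsProbNat p) (C : X × Y → ℝ) :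
    ∑ z, C z * π.occupation p z = ∑' t, p t * ∑ z, C z * π.law t z := by
  simp only [occupation, ← tsum_mul_left, Finset.mul_sum]
  rw [← Summable.tsum_finsetSum fun z _ => (hp.summable_mul (π.law_mem_Icc hMX · z)).mul_left _]
  simp only [mul_left_comm]

/-- Peeling off `t = 0` gives `κ = δ ν + (1 - δ) ∑_z ρ(z, ·)`. -/
lemma abs_sum_stepOccupation_sub_occupation_le (hMX : IsStationaryMC MX) {δ : ℝ}
    (h0 : 0 < δ) (h1 : δ ≤ 1) (z' : X × Y) :
    |∑ z, π.stepOccupation (pGeom δ) z z' - π.occupation (pGeom δ) z'| ≤ δ := by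
  have hp := isProbNat_pGeom h0 h1
  have hlaw := π.law_mem_Icc hMX
  set S := ∑' t, pGeom δ t * π.law (t + 1) z'
  have hstep : ∑ z, π.stepOccupation (pGeom δ) z z' = S := by
    simp only [stepOccupation]
    rw [hp.sum_tsum_mul fun t z => unitInterval.mul_mem (hlaw t z) (π.trans_mem_Icc t z z')]
    simp only [mul_comm (π.law _ _)]
    rfl
  have hocc : π.occupation (pGeom δ) z' = δ * π.init z' + (1 - δ) * S := by
    rw [occupation, (hp.summable_mul (hlaw · z')).tsum_eq_zero_add, ← tsum_mul_left]
    simp only [pGeom, pow_zero, mul_one, pow_succ]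
    congr 1
    exact tsum_congr fun t => by ring
  have hS : |S - π.init z'| ≤ 1 :=
    abs_sub_le_of_nonneg_of_le (hp.tsum_mul_mem_Icc fun t => hlaw (t + 1) z').1
      (hp.tsum_mul_mem_Icc fun t => hlaw (t + 1) z').2 (hlaw 0 z').1 (hlaw 0 z').2
  calc |∑ z, π.stepOccupation (pGeom δ) z z' - π.occupation (pGeom δ) z'|
      = δ * |S - π.init z'| := by
        rw [hstep, hocc, show S - (δ * π.init z' + (1 - δ) * S) = δ * (S - π.init z') by ring,
          abs_mul, abs_of_pos h0]
    _ ≤ δ := mul_le_of_le_one_right h0.le hS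

end MarkovCoupling

section StepLaw

variable {X Y : Type*} [Fintype X] [Fintype Y] {MX : MarkovChain X} {MY : MarkovChain Y}

/-- `ρ z z'` plays the role of the joint law of two consecutive states `(Z_t, Z_{t+1})` of a
Markovian coupling with `Z_t ∼ κ`; `ε` bounds the failure of `κ` to be stationary. -/
def IsStepLaw (MX : MarkovChain X) (MY : MarkovChain Y) (ε : ℝ) (κ : X × Y → ℝ)
    (ρ : X × Y → X × Y → ℝ) : Prop :=
  IsCoupling κ MX.init MY.init ∧
  (∀ z, IsCoupling (ρ z) (fun x' => κ z * MX.kernel z.1 x') (fun y' => κ z * MY.kernel z.2 y')) ∧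
  ∀ z', |∑ z, ρ z z' - κ z'| ≤ ε

lemma MarkovCoupling.isStepLaw_occupation (hMX : IsStationaryMC MX) (hMY : IsStationaryMC MY)
    (π : MarkovCoupling MX MY) {δ : ℝ} (h0 : 0 < δ) (h1 : δ ≤ 1) :
    IsStepLaw MX MY δ (π.occupation (pGeom δ)) (π.stepOccupation (pGeom δ)) :=
  ⟨π.isCoupling_occupation hMX hMY (isProbNat_pGeom h0 h1),
   π.isCoupling_stepOccupation hMX (isProbNat_pGeom h0 h1),
   π.abs_sum_stepOccupation_sub_occupation_le hMX h0 h1⟩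

lemma isClosed_setOf_isStepLaw :
    IsClosed {q : ℝ × (X × Y → ℝ) × (X × Y → X × Y → ℝ) | IsStepLaw MX MY q.1 q.2.1 q.2.2} := by
  simp only [IsStepLaw, ofPred_and, ofPred_forall]
  exact (isClosed_setOf_isCoupling.preimage
      (f := fun q : ℝ × (X × Y → ℝ) × (X × Y → X × Y → ℝ) => (q.2.1, MX.init, MY.init))
      (by fun_prop)).inter
    ((isClosed_iInter fun z => isClosed_setOf_isCoupling.preimage
      (f := fun q : ℝ × (X × Y → ℝ) × (X × Y → X × Y → ℝ) => (q.2.2 z,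
        fun x' => q.2.1 z * MX.kernel z.1 x', fun y' => q.2.1 z * MY.kernel z.2 y'))
      (by fun_prop)).inter
      (isClosed_iInter fun z' => isClosed_le (by fun_prop) (by fun_prop)))

lemma IsStepLaw.mem_Icc {ε : ℝ} {κ : X × Y → ℝ} {ρ : X × Y → X × Y → ℝ}
    (h : IsStepLaw MX MY ε κ ρ) : (κ, ρ) ∈ Icc 0 1 := by
  have hκ := (h.1.isProb MX.init_prob).le_one
  refine ⟨Prod.le_def.2 ⟨h.1.1, fun z => (h.2.1 z).1⟩, Prod.le_def.2 ⟨hκ, fun z z' => ?_⟩⟩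
  exact ((h.2.1 z).le_left z').trans
    (mul_le_one₀ (hκ z) ((MX.kernel_prob z.1).1 z'.1) ((MX.kernel_prob z.1).le_one z'.1))

noncomputable def IsStepLaw.markovCoupling {ε : ℝ} {κ : X × Y → ℝ} {ρ : X × Y → X × Y → ℝ}
    (h : IsStepLaw MX MY ε κ ρ) : MarkovCoupling MX MY where
  init := κ
  trans _ z := if 0 < κ z then fun z' => ρ z z' / κ z else (prodCoupling MX MY).trans 0 z
  init_coupling := h.1
  trans_coupling _ z := by
    split_ifs with hz
    · exact (h.2.1 z).div_const hz
    · exact (prodCoupling MX MY).trans_coupling 0 z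

lemma IsStepLaw.trans_mul_init {ε : ℝ} {κ : X × Y → ℝ} {ρ : X × Y → X × Y → ℝ}
    (h : IsStepLaw MX MY ε κ ρ) (t : ℕ) (z z' : X × Y) :
    h.markovCoupling.trans t z z' * κ z = ρ z z' := by
  simp only [IsStepLaw.markovCoupling]
  split_ifs with hz
  · exact div_mul_cancel₀ _ hz.ne'
  · have hκ : κ z = 0 := le_antisymm (not_lt.1 hz) (h.1.1 z)
    have hρ := (h.2.1 z).le_left z'
    rw [hκ, zero_mul] at hρ
    rw [hκ, mul_zero]
    exact (le_antisymm hρ ((h.2.1 z).1 z')).symm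

lemma IsStepLaw.hasStationaryInit {κ : X × Y → ℝ} {ρ : X × Y → X × Y → ℝ}
    (h : IsStepLaw MX MY 0 κ ρ) : HasStationaryInit h.markovCoupling := by
  intro z'
  show ∑ z, h.markovCoupling.trans 0 z z' * κ z = κ z'
  simp only [h.trans_mul_init]
  exact sub_eq_zero.1 (abs_nonpos_iff.1 (h.2.2 z'))

lemma dOTC_le_of_isStepLaw {C : X × Y → ℝ} (hC : ∀ z, 0 ≤ C z) {κ : X × Y → ℝ}
    {ρ : X × Y → X × Y → ℝ} (h : IsStepLaw MX MY 0 κ ρ) : dOTC MX MY C ≤ ∑ z, C z * κ z := by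
  refine ciInf_le ⟨0, ?_⟩ (⟨h.markovCoupling, fun _ => rfl, h.hasStationaryInit⟩ :
    {π : MarkovCoupling MX MY // IsTimeHomogeneous π ∧ HasStationaryInit π})
  rintro _ ⟨π, rfl⟩
  exact Finset.sum_nonneg fun z _ => mul_nonneg (hC z) (π.1.init_coupling.1 z)

lemma isClosed_stepLaw_levels (C : X × Y → ℝ) (c : ℝ) :
    IsClosed {ε ∈ Icc (0 : ℝ) 1 | ∃ κ ρ, IsStepLaw MX MY ε κ ρ ∧ ∑ z, C z * κ z ≤ c} := by
  have hK : IsCompact {q : ℝ × (X × Y → ℝ) × (X × Y → X × Y → ℝ) |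
      q.1 ∈ Icc 0 1 ∧ IsStepLaw MX MY q.1 q.2.1 q.2.2 ∧ ∑ z, C z * q.2.1 z ≤ c} := by
    refine (isCompact_Icc (a := 0) (b := 1)).of_isClosed_subset ?_ fun q hq =>
      ⟨Prod.le_def.2 ⟨hq.1.1, hq.2.1.mem_Icc.1⟩, Prod.le_def.2 ⟨hq.1.2, hq.2.1.mem_Icc.2⟩⟩
    simp only [ofPred_and]
    exact (isClosed_Icc.preimage continuous_fst).inter
      (isClosed_setOf_isStepLaw.inter (isClosed_le (by fun_prop) continuous_const))
  convert (hK.image continuous_fst).isClosed using 1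
  ext ε
  simp
end StepLaw

lemma dOTM_le_dOTC {X Y : Type*} [Fintype X] [Fintype Y] {MX : MarkovChain X}
    {MY : MarkovChain Y} (hMX : IsStationaryMC MX) (hMY : IsStationaryMC MY)
    {C : X × Y → ℝ} (hC : ∀ z, 0 ≤ C z) {p : ℕ → ℝ} (hp : IsProbNat p) :
    dOTM p MX MY C ≤ dOTC MX MY C := by
  have : Nonempty {π : MarkovCoupling MX MY // IsTimeHomogeneous π ∧ HasStationaryInit π} :=
    ⟨⟨prodCoupling MX MY, fun _ => rfl, hasStationaryInit_prodCoupling hMX hMY⟩⟩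
  refine le_ciInf fun π => (ciInf_le ⟨0, ?_⟩ π.1).trans_eq ?_
  · rintro _ ⟨π', rfl⟩
    exact tsum_nonneg fun t => mul_nonneg (hp.1 t)
      (Finset.sum_nonneg fun z _ => mul_nonneg (hC z) (π'.law_nonneg t z))
  · simp only [π.1.law_eq_init π.2.1 π.2.2, hp.tsum_mul_const]

/-- For stationary Markov chains, `d_OTC = lim_{δ→0⁺} d_WL^{δ,(∞)}`. -/
theorem stmt8 {X Y : Type*} [Fintype X] [Fintype Y]
    (MX : MarkovChain X) (MY : MarkovChain Y)
    (hMX : IsStationaryMC MX) (hMY : IsStationaryMC MY)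
    (C : X × Y → ℝ) (hC : ∀ z, 0 ≤ C z) :
    Tendsto (fun δ => dOTM (pGeom δ) MX MY C) (𝓝[>] (0 : ℝ))
      (𝓝 (dOTC MX MY C)) := by
  rw [tendsto_order]
  refine ⟨fun a ha => ?_, fun a ha => ?_⟩
  · obtain ⟨c, hac, hc⟩ := exists_between ha
    by_contra hnot
    have hfreq : ∃ᶠ δ in 𝓝[>] (0 : ℝ),
        δ ∈ {ε ∈ Icc (0 : ℝ) 1 | ∃ κ ρ, IsStepLaw MX MY ε κ ρ ∧ ∑ z, C z * κ z ≤ c} := by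
      refine ((not_eventually.1 hnot).and_eventually (Ioo_mem_nhdsGT one_pos)).mono ?_
      rintro δ ⟨hle, hδ0, hδ1⟩
      obtain ⟨π, hπ⟩ := exists_lt_of_ciInf_lt ((not_lt.1 hle).trans_lt hac)
      refine ⟨⟨hδ0.le, hδ1.le⟩, _, _, π.isStepLaw_occupation hMX hMY hδ0 hδ1.le, ?_⟩
      rw [π.sum_mul_occupation hMX (isProbNat_pGeom hδ0 hδ1.le)]
      exact hπ.le
    obtain ⟨-, κ, ρ, hstep, hcost⟩ := (isClosed_stepLaw_levels C c).closure_subset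
      (mem_closure_iff_frequently.2 (hfreq.filter_mono nhdsWithin_le_nhds))
    exact hc.not_ge ((dOTC_le_of_isStepLaw hC hstep).trans hcost)
  · filter_upwards [Ioo_mem_nhdsGT one_pos] with δ hδ
    exact (dOTM_le_dOTC hMX hMY hC (isProbNat_pGeom hδ.1 hδ.2.le)).trans_lt ha
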